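/- arXiv:1808.01240 — 2 statements merged into one kernel-verified Lean document; each statement's English description precedes it below -/
import Mathlib

section
/- Let a > 0, b > 0 and ν ∈ ℝ. Then (∫₀^∞ x^{ν−2} e^{−(a x + b/x)/2} dx) / (∫₀^∞ x^{ν−1} e^{−(a x + b/x)/2} dx) = √(a/b) · K_{ν+1}(√(a b)) / K_ν(√(a b)) − 2ν/b, where K_ν(x) = ∫₀^∞ e^{−x cosh t} cosh(ν t) dt. That is, the inverse moment of W ~ GIG(ν, a, b) equals √(a/b) K_{ν+1}(√(ab))/K_ν(√(ab)) − 2ν/b. -/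
open Real MeasureTheory

/-- The modified Bessel function of the third kind, via the integral representation
`K_ν(x) = ∫₀^∞ e^{-x cosh t} cosh(ν t) dt`. -/
noncomputable def besselK (ν x : ℝ) : ℝ :=
  ∫ t in Set.Ioi (0 : ℝ), exp (-x * cosh t) * cosh (ν * t)

/-!
The substitution `x = √(b/a) eᵗ` turns `∫₀^∞ x^{μ-1} e^{-(ax + b/x)/2} dx` into
`√(b/a)^μ ∫_ℝ e^{μt - c cosh t} dt = 2 √(b/a)^μ K_μ(c)` with `c = √(ab)`, so the ratio in question
is `√(a/b) K_{ν-1}(c) / K_ν(c)`. Integrating the derivative of `e^{νt - c cosh t}` over the line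
gives the recurrence `K_{ν+1}(c) - K_{ν-1}(c) = (2ν/c) K_ν(c)`, which eliminates `K_{ν-1}`.
-/

open Set

theorem sq_div_four_le_cosh (t : ℝ) : t ^ 2 / 4 ≤ cosh t := by
  have h := quadratic_le_exp_of_nonneg (abs_nonneg t)
  rw [sq_abs] at h
  rw [← cosh_abs, cosh_eq]
  linarith [exp_pos (-|t|), abs_nonneg t]

theorem integrable_exp_mul_sub_mul_cosh {c : ℝ} (hc : 0 < c) (μ : ℝ) :
    Integrable fun t ↦ exp (μ * t - c * cosh t) := by
  refine ((integrable_exp_neg_mul_sq (by positivity : 0 < c / 8)).const_mul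
    (exp (2 * μ ^ 2 / c))).mono' (by fun_prop) (.of_forall fun t ↦ ?_)
  rw [norm_of_nonneg (exp_pos _).le, ← exp_add, exp_le_exp]
  have hcosh := sq_div_four_le_cosh t
  have hlinear : μ * t ≤ 2 * μ ^ 2 / c + c / 8 * t ^ 2 := by
    rw [div_add' _ _ _ hc.ne', le_div_iff₀ hc]
    nlinarith [sq_nonneg (c * t - 4 * μ)]
  nlinarith

theorem exp_mul_sub_mul_cosh_add_exp_neg_mul_sub_mul_cosh (μ c t : ℝ) :
    exp (μ * t - c * cosh t) + exp (-μ * t - c * cosh t)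
      = 2 * (exp (-c * cosh t) * cosh (μ * t)) := by
  rw [cosh_eq (μ * t), sub_eq_add_neg, sub_eq_add_neg, exp_add, exp_add, neg_mul, neg_mul]
  ring

theorem integral_exp_mul_sub_mul_cosh {c : ℝ} (hc : 0 < c) (μ : ℝ) :
    ∫ t, exp (μ * t - c * cosh t) = 2 * besselK μ c := by
  have hreflect : ∫ t, exp (-μ * t - c * cosh t) = ∫ t, exp (μ * t - c * cosh t) := by
    rw [← integral_neg_eq_self]
    simp only [cosh_neg, neg_mul_neg]
  calc ∫ t, exp (μ * t - c * cosh t)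
      = (∫ t, (exp (μ * t - c * cosh t) + exp (-μ * t - c * cosh t))) / 2 := by
        rw [integral_add (integrable_exp_mul_sub_mul_cosh hc μ)
          (integrable_exp_mul_sub_mul_cosh hc (-μ)), hreflect]
        ring
    _ = ∫ t, exp (-c * cosh t) * cosh (μ * t) := by
        simp only [exp_mul_sub_mul_cosh_add_exp_neg_mul_sub_mul_cosh, integral_const_mul]
        ring
    _ = ∫ t, exp (-c * cosh |t|) * cosh (μ * |t|) := by
        congr with t
        rcases abs_choice t with h | h <;> simp [h]
    _ = 2 * besselK μ c := integral_comp_abs (f := fun t ↦ exp (-c * cosh t) * cosh (μ * t))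

theorem besselK_pos {c : ℝ} (hc : 0 < c) (μ : ℝ) : 0 < besselK μ c := by
  have h := integral_exp_pos (integrable_exp_mul_sub_mul_cosh hc μ)
  rw [integral_exp_mul_sub_mul_cosh hc] at h
  linarith

-- `(μ - c sinh t) e^{μt - c cosh t}`, with `sinh t` absorbed into the exponents.
theorem hasDerivAt_exp_mul_sub_mul_cosh (μ c t : ℝ) :
    HasDerivAt (fun t ↦ exp (μ * t - c * cosh t))
      (μ * exp (μ * t - c * cosh t)
        - c / 2 * (exp ((μ + 1) * t - c * cosh t) - exp ((μ - 1) * t - c * cosh t))) t := by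
  have h : HasDerivAt (fun t ↦ μ * t - c * cosh t) (μ - c * sinh t) t :=
    (((hasDerivAt_id t).const_mul μ).sub ((hasDerivAt_cosh t).const_mul c)).congr_deriv
      (by rw [mul_one])
  convert h.exp using 1
  rw [sinh_eq, add_mul, sub_mul, one_mul, sub_eq_add_neg (μ * t), sub_eq_add_neg (μ * t + t),
    sub_eq_add_neg (μ * t - t), exp_add, exp_add, exp_add, sub_eq_add_neg (μ * t), exp_add,
    exp_add, exp_neg]
  field_simp

theorem besselK_add_one_sub_besselK_sub_one {c : ℝ} (hc : 0 < c) (μ : ℝ) :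
    besselK (μ + 1) c - besselK (μ - 1) c = 2 * μ / c * besselK μ c := by
  have hint := integrable_exp_mul_sub_mul_cosh hc
  have hA : Integrable fun t ↦ μ * exp (μ * t - c * cosh t) := (hint μ).const_mul μ
  have hB : Integrable fun t ↦
      c / 2 * (exp ((μ + 1) * t - c * cosh t) - exp ((μ - 1) * t - c * cosh t)) :=
    ((hint (μ + 1)).sub (hint (μ - 1))).const_mul _
  have h := integral_eq_zero_of_hasDerivAt_of_integrable (hasDerivAt_exp_mul_sub_mul_cosh μ c)
    (hA.sub hB) (hint μ)
  rw [integral_sub hA hB, integral_const_mul, integral_const_mul, integral_sub (hint _) (hint _),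
    integral_exp_mul_sub_mul_cosh hc, integral_exp_mul_sub_mul_cosh hc,
    integral_exp_mul_sub_mul_cosh hc] at h
  field_simp
  linarith

theorem integral_Ioi_zero_eq_integral_exp_smul {E : Type*} [NormedAddCommGroup E]
    [NormedSpace ℝ E] (f : ℝ → E) : ∫ x in Ioi 0, f x = ∫ t, exp t • f (exp t) := by
  rw [← range_exp, ← image_univ, integral_image_eq_integral_abs_deriv_smul MeasurableSet.univ
    (fun t _ ↦ (hasDerivAt_exp t).hasDerivWithinAt) exp_injective.injOn]
  simp [abs_of_pos (exp_pos _)]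

theorem integral_rpow_mul_exp_eq_besselK {a b : ℝ} (ha : 0 < a) (hb : 0 < b) (μ : ℝ) :
    ∫ x in Ioi 0, x ^ (μ - 1) * exp (-(a * x + b / x) / 2)
      = 2 * √(b / a) ^ μ * besselK μ √(a * b) := by
  set r := √(b / a)
  have hr : 0 < r := by positivity
  have har : a * r = √(a * b) := by
    rw [← sqrt_sq ha.le, ← sqrt_mul (sq_nonneg a), sqrt_sq ha.le]
    field_simp
  have hbr : b / r = √(a * b) := by
    rw [div_eq_iff hr.ne', ← sqrt_mul (by positivity)]
    field_simp
    rw [sqrt_sq hb.le]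
  have hintegrand (t : ℝ) : exp (t + log r) • ((exp (t + log r)) ^ (μ - 1) *
      exp (-(a * exp (t + log r) + b / exp (t + log r)) / 2))
      = r ^ μ * exp (μ * t - √(a * b) * cosh t) := by
    have hexponent : -(a * (exp t * r) + b / (exp t * r)) / 2 = -(√(a * b) * cosh t) := by
      rw [mul_comm (exp t), ← mul_assoc, har, div_mul_eq_div_div, hbr, cosh_eq, exp_neg]
      ring
    rw [exp_add, exp_log hr, smul_eq_mul, rpow_sub_one (by positivity),
      mul_rpow (exp_pos t).le hr.le, ← exp_mul, hexponent, sub_eq_add_neg, exp_add]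
    field_simp
  rw [integral_Ioi_zero_eq_integral_exp_smul, ← integral_add_right_eq_self _ (log r)]
  simp only [hintegrand, integral_const_mul,
    integral_exp_mul_sub_mul_cosh (by positivity : 0 < √(a * b))]
  ring

/-- The inverse moment of a Generalized Inverse Gaussian random variable `W ~ GIG(ν, a, b)`
equals `√(a/b) K_{ν+1}(√(ab)) / K_ν(√(ab)) - 2ν/b`, expressed as a ratio of integrals. -/
theorem gig_inverse_moment (a b ν : ℝ) (ha : 0 < a) (hb : 0 < b) :
    (∫ x in Set.Ioi (0 : ℝ), x ^ (ν - 2) * exp (-(a * x + b / x) / 2)) /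
      (∫ x in Set.Ioi (0 : ℝ), x ^ (ν - 1) * exp (-(a * x + b / x) / 2)) =
      Real.sqrt (a / b) * besselK (ν + 1) (Real.sqrt (a * b)) / besselK ν (Real.sqrt (a * b))
        - 2 * ν / b := by
  have hc : 0 < √(a * b) := by positivity
  have hr : 0 < √(b / a) := by positivity
  have hK := besselK_pos hc ν
  have hrec := besselK_add_one_sub_besselK_sub_one hc ν
  have hinv : √(a / b) = (√(b / a))⁻¹ := by rw [← sqrt_inv, inv_div]
  have hb' : b = √(a * b) * √(b / a) := by
    rw [← sqrt_mul (by positivity), eq_comm, sqrt_eq_iff_mul_self_eq_of_pos hb]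
    field_simp
  rw [show ν - 2 = ν - 1 - 1 by ring, integral_rpow_mul_exp_eq_besselK ha hb,
    integral_rpow_mul_exp_eq_besselK ha hb, rpow_sub_one hr.ne', hinv]
  generalize √(b / a) = r at *
  generalize √(a * b) = c at *
  subst hb'
  field_simp at hrec ⊢
  linear_combination -hrec
end

section
/- Let τ ∈ (0,1), δ > 0, μ ∈ ℝ, and let W be a standard exponential random variable (rate 1) and Z an independent standard normal variable. Set ξ̃ = (1 − 2τ)/(τ(1 − τ)) and σ̃ = √(2/(τ(1 − τ))), and define Y = μ + δ ξ̃ W + √W · δ σ̃ Z. Then the law of Y has density f_AL(y; μ, δ, τ) = (τ(1 − τ)/δ) exp(−ρ_τ((y − μ)/δ)), where ρ_τ(x) = x(τ − 1{x<0}); that is, the univariate marginal of the constrained Multivariate Asymmetric Laplace mixture with scale δ, computed at quantile level τ, is the Asymmetric Laplace distribution AL(μ, δ, τ). -/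
/-!
Conditionally on `W = w`, `Y` is normal with mean `μ + δξw` and variance `(δσ)² w`, so the law
of `Y` has density `y ↦ ∫₀^∞ e^{-w} φ(y; μ + δξw, (δσ)² w) dw`. Completing the square turns this
into `∫₀^∞ w^{-1/2} e^{-(A/w + Bw)} dw = √(π/B) e^{-2√(AB)}`, which after `w = t²` is the
Cauchy–Schlömilch integral `∫₀^∞ e^{-(bt - c/t)²} dt = √π / (2b)`: the substitution
`u = bt - c/t` maps `(0, ∞)` onto `ℝ`, and the involution `t ↦ c/(bt)` shows that the two halves
of `du = (b + c/t²) dt` contribute equally. The result is the Laplace-type density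
`(θ² + 2v)^{-1/2} exp((θx - |x|√(θ² + 2v))/v)`, and the constraints on `ξ` and `σ` are exactly
what make `ξ² + 2σ² = (τ(1-τ))⁻²`, turning it into the asymmetric Laplace density.
-/

open MeasureTheory ProbabilityTheory Real

/-- The check (loss) function at level `τ`: `ρ_τ(x) = x(τ - 1{x<0})`. -/
noncomputable def checkLoss (τ x : ℝ) : ℝ := x * (τ - if x < 0 then 1 else 0)

open Set ENNReal

lemma lintegral_Ioi_comp_div {k : ℝ} (hk : 0 < k) (F : ℝ → ℝ≥0∞) :
    ∫⁻ t in Ioi 0, ENNReal.ofReal (k / t ^ 2) * F (k / t) = ∫⁻ t in Ioi 0, F t := by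
  have hderiv : ∀ t ∈ Ioi (0 : ℝ), HasDerivWithinAt (k / ·) (-k / t ^ 2) (Ioi 0) t := by
    intro t ht
    simpa [div_eq_mul_inv, neg_div] using
      ((hasDerivAt_inv (ne_of_gt ht)).const_mul k).hasDerivWithinAt
  have hinv : ∀ t ∈ Ioi (0 : ℝ), k / (k / t) = t := fun t _ => div_div_cancel₀ hk.ne'
  have himage : (k / ·) '' Ioi (0 : ℝ) = Ioi 0 :=
    Subset.antisymm (image_subset_iff.2 fun t ht => div_pos hk ht)
      fun t ht => ⟨k / t, div_pos hk ht, hinv t ht⟩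
  have hinj : InjOn (k / ·) (Ioi (0 : ℝ)) := fun s hs t ht hst => by
    rw [← hinv s hs, ← hinv t ht]; exact congrArg (k / ·) hst
  conv_rhs =>
    rw [← himage, lintegral_image_eq_lintegral_abs_deriv_mul measurableSet_Ioi hderiv hinj]
  refine setLIntegral_congr_fun measurableSet_Ioi fun t _ => ?_
  rw [abs_div, abs_neg, abs_of_pos hk, abs_sq]

lemma image_mul_sub_div_Ioi {b c : ℝ} (hb : 0 < b) (hc : 0 < c) :
    (fun t => b * t - c / t) '' Ioi 0 = univ := by
  refine eq_univ_of_forall fun y => ?_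
  -- the positive root of `b t² - y t - c = 0`
  set s := √(y ^ 2 + 4 * b * c)
  have hs : s ^ 2 = y ^ 2 + 4 * b * c := sq_sqrt (by positivity)
  have hys : 0 < y + s := by
    have : |y| < s := abs_lt_of_sq_lt_sq (by rw [hs]; nlinarith [mul_pos hb hc]) (sqrt_nonneg _)
    linarith [neg_abs_le y]
  refine ⟨(y + s) / (2 * b), div_pos hys (by positivity), ?_⟩
  field_simp
  linear_combination hs

lemma strictMonoOn_mul_sub_div {b c : ℝ} (hb : 0 < b) (hc : 0 ≤ c) :
    StrictMonoOn (fun t => b * t - c / t) (Ioi 0) := fun s hs t ht hst => by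
  have : c / t ≤ c / s := div_le_div_of_nonneg_left hc hs hst.le
  have : b * s < b * t := mul_lt_mul_of_pos_left hst hb
  simp only
  linarith

lemma lintegral_exp_neg_sq : ∫⁻ u : ℝ, ENNReal.ofReal (exp (-u ^ 2)) = ENNReal.ofReal √π := by
  rw [← ofReal_integral_eq_lintegral_ofReal (by simpa using integrable_exp_neg_mul_sq one_pos)
    (.of_forall fun _ => (exp_pos _).le)]
  simpa using congrArg ENNReal.ofReal (integral_gaussian 1)

lemma lintegral_exp_neg_sq_mul_sub_div_of_pos {b c : ℝ} (hb : 0 < b) (hc : 0 < c) :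
    ∫⁻ t in Ioi 0, ENNReal.ofReal (exp (-(b * t - c / t) ^ 2)) = ENNReal.ofReal (√π / (2 * b)) := by
  set f : ℝ → ℝ := fun t => b * t - c / t
  set g : ℝ → ℝ≥0∞ := fun u => ENNReal.ofReal (exp (-u ^ 2))
  set I := ∫⁻ t in Ioi 0, g (f t)
  have hgf : Measurable fun t => g (f t) := by fun_prop
  have hderiv : ∀ t ∈ Ioi (0 : ℝ), HasDerivWithinAt f (b + c / t ^ 2) (Ioi 0) t := by
    intro t ht
    have := ((hasDerivAt_id t).const_mul b).sub ((hasDerivAt_inv (ne_of_gt ht)).const_mul c)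
    simp only [id, mul_one, mul_neg, sub_neg_eq_add, ← div_eq_mul_inv] at this
    exact this.hasDerivWithinAt
  -- `t ↦ c / (b t)` is an involution of `(0, ∞)` reversing the sign of `f`
  have hreflect : ∫⁻ t in Ioi 0, ENNReal.ofReal (c / t ^ 2) * g (f t) = ENNReal.ofReal b * I := by
    rw [← lintegral_const_mul _ hgf, ← lintegral_Ioi_comp_div (div_pos hc hb)]
    refine setLIntegral_congr_fun measurableSet_Ioi fun t (ht : 0 < t) => ?_
    have hneg : f (c / b / t) = -f t := by simp only [f]; field_simp; ring
    rw [hneg, ← mul_assoc, ← ENNReal.ofReal_mul (by positivity)]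
    simp only [g, neg_sq]
    congr 2
    field_simp
  have hsplit : ENNReal.ofReal √π = ENNReal.ofReal (2 * b) * I := calc
    ENNReal.ofReal √π = ∫⁻ u in f '' Ioi 0, g u := by
      rw [image_mul_sub_div_Ioi hb hc, Measure.restrict_univ, lintegral_exp_neg_sq]
    _ = ∫⁻ t in Ioi 0, ENNReal.ofReal b * g (f t) + ENNReal.ofReal (c / t ^ 2) * g (f t) := by
      rw [lintegral_image_eq_lintegral_abs_deriv_mul measurableSet_Ioi hderiv
        (strictMonoOn_mul_sub_div hb hc.le).injOn]
      refine setLIntegral_congr_fun measurableSet_Ioi fun t (ht : 0 < t) => ?_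
      rw [abs_of_pos (by positivity), ENNReal.ofReal_add hb.le (by positivity), add_mul]
    _ = ENNReal.ofReal (2 * b) * I := by
      rw [lintegral_add_left (hgf.const_mul _), lintegral_const_mul _ hgf, hreflect, ← add_mul,
        ← ENNReal.ofReal_add hb.le hb.le, two_mul]
  rw [ENNReal.ofReal_div_of_pos (by positivity), hsplit,
    mul_comm, ENNReal.mul_div_cancel_right (by simpa using hb) ENNReal.ofReal_ne_top]

lemma lintegral_exp_neg_sq_mul_sub_div {b c : ℝ} (hb : 0 < b) (hc : 0 ≤ c) :
    ∫⁻ t in Ioi 0, ENNReal.ofReal (exp (-(b * t - c / t) ^ 2)) = ENNReal.ofReal (√π / (2 * b)) := by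
  rcases hc.eq_or_lt with rfl | hc
  · have : ∀ t : ℝ, -(b * t - 0 / t) ^ 2 = -b ^ 2 * t ^ 2 := fun t => by ring
    simp_rw [this]
    rw [← ofReal_integral_eq_lintegral_ofReal
      (integrable_exp_neg_mul_sq (by positivity)).integrableOn
      (.of_forall fun _ => (exp_pos _).le), integral_gaussian_Ioi,
      sqrt_div' _ (by positivity), sqrt_sq hb.le]
    ring_nf
  · exact lintegral_exp_neg_sq_mul_sub_div_of_pos hb hc

lemma lintegral_inv_sqrt_mul_exp_neg_div_add_mul {A B : ℝ} (hA : 0 ≤ A) (hB : 0 < B) :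
    ∫⁻ w in Ioi 0, ENNReal.ofReal ((√w)⁻¹ * exp (-(A / w + B * w)))
      = ENNReal.ofReal (√(π / B) * exp (-(2 * √(A * B)))) := by
  have hderiv : ∀ t ∈ Ioi (0 : ℝ), HasDerivWithinAt (· ^ 2) (2 * t) (Ioi 0) t := fun t _ => by
    simpa using (hasDerivAt_pow 2 t).hasDerivWithinAt
  have hinj : InjOn (· ^ 2 : ℝ → ℝ) (Ioi 0) :=
    (pow_left_strictMonoOn₀ two_ne_zero).injOn.mono Ioi_subset_Ici_self
  have himage : (· ^ 2 : ℝ → ℝ) '' Ioi 0 = Ioi 0 :=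
    Subset.antisymm (image_subset_iff.2 fun t (ht : 0 < t) => pow_pos ht 2)
      fun w (hw : 0 < w) => ⟨√w, sqrt_pos.2 hw, sq_sqrt hw.le⟩
  have hsq : ∀ t ≠ 0, A / t ^ 2 + B * t ^ 2 = (√B * t - √A / t) ^ 2 + 2 * √(A * B) := by
    intro t ht
    rw [sqrt_mul hA]
    field_simp
    linear_combination (-1 : ℝ) * sq_sqrt hA - t ^ 4 * sq_sqrt hB.le
  rw [← himage, lintegral_image_eq_lintegral_abs_deriv_mul measurableSet_Ioi hderiv hinj]
  calc ∫⁻ t in Ioi 0, ENNReal.ofReal |2 * t| *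
        ENNReal.ofReal ((√(t ^ 2))⁻¹ * exp (-(A / t ^ 2 + B * t ^ 2)))
      = ∫⁻ t in Ioi 0, ENNReal.ofReal (2 * exp (-(2 * √(A * B)))) *
          ENNReal.ofReal (exp (-(√B * t - √A / t) ^ 2)) := by
        refine setLIntegral_congr_fun measurableSet_Ioi fun t (ht : 0 < t) => ?_
        rw [← ENNReal.ofReal_mul (by positivity), ← ENNReal.ofReal_mul (by positivity),
          abs_of_pos (by positivity), sqrt_sq ht.le, hsq t ht.ne', neg_add, exp_add]
        congr 1
        field_simp
    _ = ENNReal.ofReal (√(π / B) * exp (-(2 * √(A * B)))) := by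
        rw [lintegral_const_mul _ (by fun_prop),
          lintegral_exp_neg_sq_mul_sub_div (sqrt_pos.2 hB) (sqrt_nonneg A),
          ← ENNReal.ofReal_mul (by positivity), sqrt_div' _ hB.le]
        congr 1
        field_simp

lemma lintegral_exp_neg_mul_gaussianPDF (m θ y : ℝ) {v : ℝ} (hv : 0 < v) :
    ∫⁻ w in Ioi 0, ENNReal.ofReal (exp (-w)) * gaussianPDF (m + θ * w) (v * w).toNNReal y
      = ENNReal.ofReal ((√(θ ^ 2 + 2 * v))⁻¹ *
          exp ((θ * (y - m) - |y - m| * √(θ ^ 2 + 2 * v)) / v)) := by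
  set x := y - m
  set r := √(θ ^ 2 + 2 * v)
  have hr : 0 < r := sqrt_pos.2 (by positivity)
  have hr2 : r ^ 2 = θ ^ 2 + 2 * v := sq_sqrt (by positivity)
  set A := x ^ 2 / (2 * v)
  set B := r ^ 2 / (2 * v)
  set K := (√(2 * π * v))⁻¹ * exp (θ * x / v)
  -- completing the square in the Gaussian exponent
  have hpoint : ∀ w ∈ Ioi (0 : ℝ),
      ENNReal.ofReal (exp (-w)) * gaussianPDF (m + θ * w) (v * w).toNNReal y
        = ENNReal.ofReal K * ENNReal.ofReal ((√w)⁻¹ * exp (-(A / w + B * w))) := by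
    intro w (hw : 0 < w)
    rw [gaussianPDF, gaussianPDFReal, Real.coe_toNNReal _ (by positivity),
      ← ENNReal.ofReal_mul (exp_pos _).le, ← ENNReal.ofReal_mul (by positivity)]
    congr 1
    have hexp : -w + -(y - (m + θ * w)) ^ 2 / (2 * (v * w)) = θ * x / v + -(A / w + B * w) := by
      simp only [x, A, B, hr2]
      field_simp
      ring
    rw [show 2 * π * (v * w) = (2 * π * v) * w by ring, sqrt_mul (by positivity), mul_inv]
    calc exp (-w) * ((√(2 * π * v))⁻¹ * (√w)⁻¹ * exp (-(y - (m + θ * w)) ^ 2 / (2 * (v * w))))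
        = (√(2 * π * v))⁻¹ * (√w)⁻¹ * exp (-w + -(y - (m + θ * w)) ^ 2 / (2 * (v * w))) := by
          rw [exp_add]; ring
      _ = K * ((√w)⁻¹ * exp (-(A / w + B * w))) := by
          rw [hexp, exp_add]; ring
  have hAB : √(A * B) = |x| * r / (2 * v) := by
    rw [← sqrt_sq (by positivity : 0 ≤ |x| * r / (2 * v))]
    congr 1
    simp only [A, B]
    field_simp
    rw [sq_abs]
  have hKB : (√(2 * π * v))⁻¹ * √(π / B) = r⁻¹ := by
    rw [show π / B = 2 * π * v / r ^ 2 by simp only [B]; field_simp, sqrt_div' _ (by positivity),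
      sqrt_sq hr.le]
    field_simp
  rw [setLIntegral_congr_fun measurableSet_Ioi hpoint, lintegral_const_mul _ (by fun_prop),
    lintegral_inv_sqrt_mul_exp_neg_div_add_mul (by positivity) (by positivity),
    ← ENNReal.ofReal_mul (by positivity), hAB]
  congr 1
  calc K * (√(π / B) * exp (-(2 * (|x| * r / (2 * v)))))
      = ((√(2 * π * v))⁻¹ * √(π / B)) * (exp (θ * x / v) * exp (-(2 * (|x| * r / (2 * v))))) := by
        ring
    _ = r⁻¹ * exp ((θ * x - |x| * r) / v) := by
        rw [hKB, ← exp_add]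
        congr 2
        field_simp
        ring

lemma checkLoss_eq (τ x : ℝ) : checkLoss τ x = (|x| - (1 - 2 * τ) * x) / 2 := by
  unfold checkLoss
  rcases lt_or_ge x 0 with hx | hx
  · rw [if_pos hx, abs_of_neg hx]; ring
  · rw [if_neg hx.not_gt, abs_of_nonneg hx]; ring

lemma gaussianReal_map_const_add_mul (c : ℝ) {k : ℝ} (hk : k ≠ 0) :
    (gaussianReal 0 1).map (fun z => c + k * z)
      = volume.withDensity (gaussianPDF c (k ^ 2).toNNReal) := by
  have : (fun z => c + k * z) = (c + ·) ∘ (k * ·) := rfl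
  rw [this, ← Measure.map_map (by fun_prop) (by fun_prop), gaussianReal_map_const_mul,
    gaussianReal_map_const_add, gaussianReal_of_var_ne_zero]
  · congr 2 <;> simp [Real.toNNReal, sq_nonneg]
  · simpa [NNReal.eq_iff] using hk

lemma map_prod_eq_withDensity_lintegral {α β : Type*} [MeasurableSpace α] [MeasurableSpace β]
    {ν : Measure α} {ρ : Measure β} [SFinite ν] [SFinite ρ] {g : α × β → ℝ} (hg : Measurable g)
    {f : α → ℝ → ℝ≥0∞} (hf : Measurable (Function.uncurry f))
    (hfiber : ∀ᵐ a ∂ν, ρ.map (fun b => g (a, b)) = volume.withDensity (f a)) :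
    (ν.prod ρ).map g = volume.withDensity (fun y => ∫⁻ a, f a y ∂ν) := by
  ext s hs
  rw [Measure.map_apply hg hs, Measure.prod_apply (hg hs), withDensity_apply _ hs]
  calc ∫⁻ a, ρ (Prod.mk a ⁻¹' (g ⁻¹' s)) ∂ν = ∫⁻ a, (∫⁻ y in s, f a y) ∂ν := by
        refine lintegral_congr_ae (hfiber.mono fun a ha => ?_)
        simp only
        rw [← withDensity_apply _ hs, ← ha, Measure.map_apply (by fun_prop) hs]
        rfl
    _ = ∫⁻ y in s, ∫⁻ a, f a y ∂ν := lintegral_lintegral_swap hf.aemeasurable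

lemma exp_mixture_density_eq_al_density {τ δ ξ σ : ℝ} (hτ : τ ∈ Ioo 0 1) (hδ : 0 < δ)
    (hξ : ξ = (1 - 2 * τ) / (τ * (1 - τ))) (hσ : σ = √(2 / (τ * (1 - τ)))) (x : ℝ) :
    (√((δ * ξ) ^ 2 + 2 * (δ * σ) ^ 2))⁻¹ *
        exp ((δ * ξ * x - |x| * √((δ * ξ) ^ 2 + 2 * (δ * σ) ^ 2)) / (δ * σ) ^ 2)
      = τ * (1 - τ) / δ * exp (-checkLoss τ (x / δ)) := by
  have hτ0 : τ ≠ 0 := hτ.1.ne'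
  have hτ1 : 1 - τ ≠ 0 := (sub_pos.2 hτ.2).ne'
  have hp : 0 < τ * (1 - τ) := mul_pos hτ.1 (sub_pos.2 hτ.2)
  have hσ2 : σ ^ 2 = 2 / (τ * (1 - τ)) := hσ ▸ sq_sqrt (by positivity)
  have hroot : √((δ * ξ) ^ 2 + 2 * (δ * σ) ^ 2) = δ / (τ * (1 - τ)) := by
    rw [← sqrt_sq (by positivity : 0 ≤ δ / (τ * (1 - τ)))]
    congr 1
    rw [mul_pow, mul_pow, hσ2, hξ]
    field_simp
    ring
  rw [hroot, checkLoss_eq, abs_div, abs_of_pos hδ, mul_pow, hσ2, hξ]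
  congr 2
  · field_simp
  · field_simp
    ring

/-- Univariate marginal of the constrained Multivariate Asymmetric Laplace mixture:
with `W` standard exponential, `Z ~ N(0,1)` independent of `W`,
`ξ̃ = (1-2τ)/(τ(1-τ))` and `σ̃ = √(2/(τ(1-τ)))`, the random variable
`Y = μ + δξ̃W + √W δσ̃ Z` has the Asymmetric Laplace density
`f_AL(y; μ, δ, τ) = (τ(1-τ)/δ) exp(-ρ_τ((y-μ)/δ))`, i.e. `Y ~ AL(μ, δ, τ)`. -/
theorem mal_marginal_is_al {Ω : Type*} [MeasurableSpace Ω]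
    (P : Measure Ω) [IsProbabilityMeasure P]
    (τ δ μ : ℝ) (hτ : τ ∈ Set.Ioo (0 : ℝ) 1) (hδ : 0 < δ)
    (W Z : Ω → ℝ) (hW : Measurable W) (hZ : Measurable Z)
    (hWlaw : P.map W =
      volume.withDensity (fun w => ENNReal.ofReal (if 0 < w then exp (-w) else 0)))
    (hZlaw : P.map Z = gaussianReal 0 1)
    (hindep : IndepFun W Z P)
    (ξ σ : ℝ)
    (hξ : ξ = (1 - 2 * τ) / (τ * (1 - τ)))
    (hσ : σ = Real.sqrt (2 / (τ * (1 - τ))))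
    (Y : Ω → ℝ) (hY : ∀ ω, Y ω = μ + δ * ξ * W ω + Real.sqrt (W ω) * (δ * σ) * Z ω) :
    P.map Y = volume.withDensity
      (fun y => ENNReal.ofReal (τ * (1 - τ) / δ * exp (-(checkLoss τ ((y - μ) / δ))))) := by
  have hσ0 : 0 < σ := hσ ▸ sqrt_pos.2 (div_pos two_pos (mul_pos hτ.1 (sub_pos.2 hτ.2)))
  set g : ℝ × ℝ → ℝ := fun q => μ + δ * ξ * q.1 + √q.1 * (δ * σ) * q.2
  have hg : Measurable g := by fun_prop
  have hWdensity : Measurable fun w : ℝ => ENNReal.ofReal (if 0 < w then exp (-w) else 0) :=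
    ENNReal.measurable_ofReal.comp (Measurable.ite measurableSet_Ioi (by fun_prop) measurable_const)
  have hlaw : P.map Y = ((P.map W).prod (P.map Z)).map g := by
    rw [show Y = g ∘ fun ω => (W ω, Z ω) from funext hY, ← Measure.map_map hg (hW.prodMk hZ),
      (indepFun_iff_map_prod_eq_prod_map_map hW.aemeasurable hZ.aemeasurable).1 hindep]
  have hfiber : ∀ᵐ w ∂(P.map W), (gaussianReal 0 1).map (fun z => g (w, z))
      = volume.withDensity (gaussianPDF (μ + δ * ξ * w) ((δ * σ) ^ 2 * w).toNNReal) := by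
    rw [hWlaw, ae_withDensity_iff hWdensity]
    refine .of_forall fun w hw => ?_
    have hw : 0 < w := by by_contra h; simp [h] at hw
    have hvar : (δ * σ) ^ 2 * w = (√w * (δ * σ)) ^ 2 := by
      rw [mul_pow _ (δ * σ), sq_sqrt hw.le, mul_comm]
    rw [hvar, ← gaussianReal_map_const_add_mul _ (by positivity)]
  rw [hlaw, hZlaw, map_prod_eq_withDensity_lintegral hg (by fun_prop) hfiber, hWlaw]
  congr 1 with y
  rw [lintegral_withDensity_eq_lintegral_mul _ hWdensity (by fun_prop),
    ← exp_mixture_density_eq_al_density hτ hδ hξ hσ,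
    ← lintegral_exp_neg_mul_gaussianPDF _ _ _ (by positivity),
    ← lintegral_indicator measurableSet_Ioi]
  congr 1 with w
  by_cases hw : 0 < w <;> simp [hw]
end
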